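/- A subset R ⊆ P is a skew category of partitions if and only if for every n ∈ ℕ the collection of subspaces H(k,l) := span{T̂_p^(n) : p ∈ R(k,l)} ⊆ Hom((ℂ^n)^{⊗k}, (ℂ^n)^{⊗l}), k,l ∈ ℕ₀, is a tensor category with duals. -/
import Mathlib


attribute [local instance] Classical.propDecidable

noncomputable section

namespace GTQG

/-! ## Partitions -/

/-- The set `P(k,l)` of partitions of `{1,…,k,1',…,l'}`, encoded as equivalence
relations (i.e. set partitions) on the disjoint union `Fin k ⊕ Fin l`. -/
abbrev Part (k l : ℕ) : Type := Setoid (Fin k ⊕ Fin l)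

/-- `ker(i,j)`: the partition whose blocks are the fibers of the labelling
`x ↦ i x` on upper points and `y ↦ j y` on lower points. -/
def kerPartA {α : Type*} {k l : ℕ} (i : Fin k → α) (j : Fin l → α) : Part k l :=
  Setoid.ker (Sum.elim i j)

/-- `ker(i,j)` for `ℕ`-valued multi-indices. -/
abbrev kerPart {k l : ℕ} (i : Fin k → ℕ) (j : Fin l → ℕ) : Part k l := kerPartA i j

/-- `ker(i) = ker(i,∅) ∈ P(k,0)`. -/
def kerPart0 {k : ℕ} (i : Fin k → ℕ) : Part k 0 := kerPartA i Fin.elim0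

/-- The pair partition `⊔ ∈ P(0,2)`. -/
def pairPart : Part 0 2 := kerPartA Fin.elim0 (fun _ => (1 : ℕ))

/-- The identity partition `| ∈ P(1,1)`. -/
def idPart : Part 1 1 := kerPartA (fun _ => (1 : ℕ)) (fun _ => (1 : ℕ))

/-- The partition `p̂ = ker((1,1,2),(2,1,1)) ∈ P(3,3)`. -/
def pHat : Part 3 3 := kerPart ![1, 1, 2] ![2, 1, 1]

/-- The involution `p* ∈ P(l,k)`, turning `p` upside-down. -/
def invol {k l : ℕ} (p : Part k l) : Part l k := Setoid.comap Sum.swap p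

/-- The number of blocks of a partition. -/
def blockCount {k l : ℕ} (p : Part k l) : ℕ := Nat.card (Quotient p)

/-- The restriction of `p` to its upper row. -/
def upperSetoid {k l : ℕ} (p : Part k l) : Setoid (Fin k) := Setoid.comap Sum.inl p

/-- The restriction of `p` to its lower row. -/
def lowerSetoid {k l : ℕ} (p : Part k l) : Setoid (Fin l) := Setoid.comap Sum.inr p

/-- `p ∈ P(k,l)` and `q ∈ P(l,l')` are compatible if the lower row of `p`
and the upper row of `q` have the same block structure
(i.e. `j^(p) ∈ S_∞(i^(q))`). -/
def Compatible {k l l' : ℕ} (p : Part k l) (q : Part l l') : Prop :=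
  lowerSetoid p = upperSetoid q

section Comp

variable {k l l' : ℕ}

/-- The points of the vertical concatenation of `p ∈ P(k,l)` and `q ∈ P(l,l')`:
`k` upper points, `l` middle points, `l'` lower points. -/
abbrev CompCarrier (k l l' : ℕ) : Type := Fin k ⊕ (Fin l ⊕ Fin l')

/-- Inclusion of the points of `p` into the vertical concatenation. -/
def topIncl : Fin k ⊕ Fin l → CompCarrier k l l' := Sum.map id Sum.inl

/-- Inclusion of the points of `q` into the vertical concatenation. -/
def botIncl : Fin l ⊕ Fin l' → CompCarrier k l l' := Sum.inr

/-- Two points of the vertical concatenation are directly connected if they are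
connected by a string of `p` or by a string of `q`. -/
def compRel (p : Part k l) (q : Part l l') :
    CompCarrier k l l' → CompCarrier k l l' → Prop := fun x y =>
  (∃ u v, p u v ∧ x = topIncl u ∧ y = topIncl v) ∨
  (∃ u v, q u v ∧ x = botIncl u ∧ y = botIncl v)

/-- The partition of all points of the vertical concatenation of `p` and `q`
into connected components. -/
def middleJoin (p : Part k l) (q : Part l l') : Setoid (CompCarrier k l l') :=
  Relation.EqvGen.setoid (compRel p q)

/-- The composition `qp ∈ P(k,l')`: vertical concatenation with all loops removed. -/
def compPart (p : Part k l) (q : Part l l') : Part k l' :=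
  Setoid.comap (Sum.map id Sum.inr) (middleJoin p q)

/-- A point of the vertical concatenation is a middle point. -/
def IsMiddle (x : CompCarrier k l l') : Prop := ∃ m : Fin l, x = Sum.inr (Sum.inl m)

/-- The number `l(q,p)` of loops in the vertical concatenation of `p` and `q`:
connected components consisting entirely of middle points. -/
def loopCount (p : Part k l) (q : Part l l') : ℕ :=
  Nat.card {c : Quotient (middleJoin p q) //
    ∀ x : CompCarrier k l l', Quotient.mk (middleJoin p q) x = c → IsMiddle x}

end Comp

/-- The direct sum of two set partitions. -/
def sumSetoid {α β : Type*} (p : Setoid α) (q : Setoid β) : Setoid (α ⊕ β) :=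
  Setoid.ker (Sum.map (Quotient.mk p) (Quotient.mk q))

/-- The tensor product `p ⊗ q ∈ P(k+k',l+l')`: horizontal concatenation. -/
def tensorPart {k l k' l' : ℕ} (p : Part k l) (q : Part k' l') : Part (k + k') (l + l') :=
  Setoid.comap
    (Sum.elim
      (fun z => Fin.addCases (fun a => Sum.inl (Sum.inl a)) (fun b => Sum.inr (Sum.inl b)) z)
      (fun z => Fin.addCases (fun a => Sum.inl (Sum.inr a)) (fun b => Sum.inr (Sum.inr b)) z))
    (sumSetoid p q)

/-! ## Rotations -/

/-- Rotating the outermost left upper leg to the lower row (reindexing map). -/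
def rotULDmap (k l : ℕ) : Fin k ⊕ Fin (l + 1) → Fin (k + 1) ⊕ Fin l
  | .inl x => .inl x.succ
  | .inr y => Fin.cases (Sum.inl 0) (fun i => Sum.inr i) y

/-- Rotating the outermost left upper leg to the lower row. -/
def rotULD {k l : ℕ} (p : Part (k + 1) l) : Part k (l + 1) :=
  Setoid.comap (rotULDmap k l) p

/-- Rotating the outermost left lower leg to the upper row (reindexing map). -/
def rotDLUmap (k l : ℕ) : Fin (k + 1) ⊕ Fin l → Fin k ⊕ Fin (l + 1)
  | .inl x => Fin.cases (Sum.inr 0) (fun i => Sum.inl i) x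
  | .inr y => .inr y.succ

/-- Rotating the outermost left lower leg to the upper row. -/
def rotDLU {k l : ℕ} (p : Part k (l + 1)) : Part (k + 1) l :=
  Setoid.comap (rotDLUmap k l) p

/-- Rotating the outermost right upper leg to the lower row (reindexing map). -/
def rotURDmap (k l : ℕ) : Fin k ⊕ Fin (l + 1) → Fin (k + 1) ⊕ Fin l
  | .inl x => .inl x.castSucc
  | .inr y => Fin.lastCases (Sum.inl (Fin.last k)) (fun i => Sum.inr i) y

/-- Rotating the outermost right upper leg to the lower row. -/
def rotURD {k l : ℕ} (p : Part (k + 1) l) : Part k (l + 1) :=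
  Setoid.comap (rotURDmap k l) p

/-- Rotating the outermost right lower leg to the upper row (reindexing map). -/
def rotDRUmap (k l : ℕ) : Fin (k + 1) ⊕ Fin l → Fin k ⊕ Fin (l + 1)
  | .inl x => Fin.lastCases (Sum.inr (Fin.last l)) (fun i => Sum.inl i) x
  | .inr y => .inr y.castSucc

/-- Rotating the outermost right lower leg to the upper row. -/
def rotDRU {k l : ℕ} (p : Part k (l + 1)) : Part (k + 1) l :=
  Setoid.comap (rotDRUmap k l) p

/-- One basic rotation step between partitions (with varying numbers of
upper and lower points). -/
inductive BasicRot : (Σ k l : ℕ, Part k l) → (Σ k l : ℕ, Part k l) → Prop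
  | uld {k l : ℕ} (p : Part (k + 1) l) : BasicRot ⟨k + 1, l, p⟩ ⟨k, l + 1, rotULD p⟩
  | dlu {k l : ℕ} (p : Part k (l + 1)) : BasicRot ⟨k, l + 1, p⟩ ⟨k + 1, l, rotDLU p⟩
  | urd {k l : ℕ} (p : Part (k + 1) l) : BasicRot ⟨k + 1, l, p⟩ ⟨k, l + 1, rotURD p⟩
  | dru {k l : ℕ} (p : Part k (l + 1)) : BasicRot ⟨k, l + 1, p⟩ ⟨k + 1, l, rotDRU p⟩

/-- `IsRotationOf q p`: `q` is obtained from `p` by finitely many basic rotations. -/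
def IsRotationOf (q p : Σ k l : ℕ, Part k l) : Prop := Relation.ReflTransGen BasicRot p q

/-- A family `R ⊆ P` is closed under rotation. -/
def RotationClosed (R : ∀ k l : ℕ, Set (Part k l)) : Prop :=
  ∀ {k l k' l' : ℕ} (p : Part k l) (q : Part k' l'),
    p ∈ R k l → IsRotationOf ⟨k', l', q⟩ ⟨k, l, p⟩ → q ∈ R k' l'

/-! ## (Skew) categories of partitions -/

/-- A skew category of partitions: a collection `R ⊆ P` containing `⊔` and `|`,
closed under involution, connected tensor products and conditioned composition. -/
structure IsSkewCategory (R : ∀ k l : ℕ, Set (Part k l)) : Prop where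
  pair_mem : pairPart ∈ R 0 2
  id_mem : idPart ∈ R 1 1
  invol_mem : ∀ {k l : ℕ} {p : Part k l}, p ∈ R k l → invol p ∈ R l k
  conn_tensor_mem : ∀ {k l k' l' : ℕ} {p : Part k l} {q : Part k' l'}
      (i : Fin k → ℕ) (j : Fin l → ℕ) (f : Fin k' → ℕ) (g : Fin l' → ℕ),
      p ∈ R k l → q ∈ R k' l' → kerPart i j = p → kerPart f g = q →
      kerPart (Fin.append i f) (Fin.append j g) ∈ R (k + k') (l + l')
  cond_comp_mem : ∀ {k l l' : ℕ} {p : Part k l} {q : Part l l'},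
      p ∈ R k l → q ∈ R l l' → Compatible p q → compPart p q ∈ R k l'

/-- A category of partitions: a collection `C ⊆ P` containing `⊔` and `|`,
closed under involution, tensor products and composition. -/
structure IsCategoryOfPartitions (C : ∀ k l : ℕ, Set (Part k l)) : Prop where
  pair_mem : pairPart ∈ C 0 2
  id_mem : idPart ∈ C 1 1
  invol_mem : ∀ {k l : ℕ} {p : Part k l}, p ∈ C k l → invol p ∈ C l k
  tensor_mem : ∀ {k l k' l' : ℕ} {p : Part k l} {q : Part k' l'},
      p ∈ C k l → q ∈ C k' l' → tensorPart p q ∈ C (k + k') (l + l')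
  comp_mem : ∀ {k l l' : ℕ} {p : Part k l} {q : Part l l'},
      p ∈ C k l → q ∈ C l l' → compPart p q ∈ C k l'

/-- The skew category of partitions generated by a family `E`. -/
def skewGenerated (E : ∀ k l : ℕ, Set (Part k l)) : ∀ k l : ℕ, Set (Part k l) :=
  fun k l => { p | ∀ R : ∀ k l : ℕ, Set (Part k l),
    IsSkewCategory R → (∀ k' l' : ℕ, E k' l' ⊆ R k' l') → p ∈ R k l }

/-- The category of partitions generated by a family `E`. -/
def catGenerated (E : ∀ k l : ℕ, Set (Part k l)) : ∀ k l : ℕ, Set (Part k l) :=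
  fun k l => { p | ∀ C : ∀ k l : ℕ, Set (Part k l),
    IsCategoryOfPartitions C → (∀ k' l' : ℕ, E k' l' ⊆ C k' l') → p ∈ C k l }

end GTQG
namespace GTQG

/-! ## The free products `ℤ₂^{*∞}` and `ℤ₂^{*n}` -/

/-- The cyclic group of order two (written multiplicatively). -/
abbrev Z2 : Type := Multiplicative (ZMod 2)

/-- `ℤ₂^{*∞}`, the free product of countably many copies of `ℤ₂`. -/
abbrev FreeZ2 : Type := Monoid.CoprodI (fun _ : ℕ => Z2)

/-- `ℤ₂^{*n}`, the free product of `n` copies of `ℤ₂`. -/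
abbrev FreeZ2n (n : ℕ) : Type := Monoid.CoprodI (fun _ : Fin n => Z2)

/-- The generator `a_i` of `ℤ₂^{*∞}`. -/
def gen (i : ℕ) : FreeZ2 := Monoid.CoprodI.of (i := i) (Multiplicative.ofAdd (1 : ZMod 2))

/-- The generator `a_i` of `ℤ₂^{*n}`. -/
def genn {n : ℕ} (i : Fin n) : FreeZ2n n :=
  Monoid.CoprodI.of (i := i) (Multiplicative.ofAdd (1 : ZMod 2))

/-- The word `a_i = a_{i₁} ⋯ a_{i_k} ∈ ℤ₂^{*∞}` associated to a multi-index. -/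
def aWord {k : ℕ} (i : Fin k → ℕ) : FreeZ2 := (List.ofFn fun x => gen (i x)).prod

/-- The word `a_i = a_{i₁} ⋯ a_{i_k} ∈ ℤ₂^{*n}` associated to a multi-index. -/
def aWordn {n k : ℕ} (i : Fin k → Fin n) : FreeZ2n n := (List.ofFn fun x => genn (i x)).prod

/-- The natural embedding `ℤ₂^{*n} → ℤ₂^{*∞}`. -/
def incl (n : ℕ) : FreeZ2n n →* FreeZ2 :=
  Monoid.CoprodI.lift (fun i => Monoid.CoprodI.of (M := fun _ : ℕ => Z2) (i := (i : ℕ)))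

/-- The endomorphism of `ℤ₂^{*∞}` induced by a map `σ : ℕ → ℕ`, `a_i ↦ a_{σ i}`.
For bijective `σ` this is the action of `S_∞`, in general that of `sS_∞`. -/
def permEndo (σ : ℕ → ℕ) : FreeZ2 →* FreeZ2 :=
  Monoid.CoprodI.lift (fun i => Monoid.CoprodI.of (M := fun _ : ℕ => Z2) (i := σ i))

/-- The endomorphism of `ℤ₂^{*n}` induced by a map `σ : Fin n → Fin n`. -/
def permEndon {n : ℕ} (σ : Fin n → Fin n) : FreeZ2n n →* FreeZ2n n :=
  Monoid.CoprodI.lift (fun i => Monoid.CoprodI.of (M := fun _ : Fin n => Z2) (i := σ i))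

/-- A map `ℕ → ℕ` is finitely supported (moves only finitely many points). -/
def FinitelySupported (σ : ℕ → ℕ) : Prop := {x | σ x ≠ x}.Finite

/-- `F_∞(D) = S_∞({a_{ind(p)} : p ∈ D(k,0)})`, the set of all words `a_i` with
`ker(i) ∈ D(k,0)` (the `S_∞`-orbit of the words of minimal-index labellings). -/
def Finfty (D : ∀ k l : ℕ, Set (Part k l)) : Set FreeZ2 :=
  { g | ∃ (k : ℕ) (i : Fin k → ℕ), kerPart0 i ∈ D k 0 ∧ g = aWord i }

end GTQG
namespace GTQG

/-! ## The maps `T̂_p` and `T_p` -/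

/-- `(ℂ^n)^{⊗k}`, realised as functions on multi-indices (the standard basis
`e_{i₁} ⊗ ⋯ ⊗ e_{i_k}` is indexed by multi-indices `i ∈ {1,…,n}^k`). -/
abbrev MV (n k : ℕ) : Type := (Fin k → Fin n) → ℂ

/-- `δ̂_p(i,j) = 1` iff `(i,j) ∈ S_∞(ind(p))`, i.e. iff `ker(i,j) = p`. -/
def hatDelta {k l : ℕ} (p : Part k l) {n : ℕ} (i : Fin k → Fin n) (j : Fin l → Fin n) : ℂ :=
  if kerPartA i j = p then 1 else 0

/-- `δ_p(i,j) = 1` iff `(i,j) ∈ sS_∞(ind(p))`, i.e. iff the labelling `(i,j)`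
is constant on the blocks of `p`. -/
def softDelta {k l : ℕ} (p : Part k l) {n : ℕ} (i : Fin k → Fin n) (j : Fin l → Fin n) : ℂ :=
  if p ≤ kerPartA i j then 1 else 0

/-- The linear map `T̂_p^(n) : (ℂ^n)^{⊗k} → (ℂ^n)^{⊗l}`. -/
def hatT (n : ℕ) {k l : ℕ} (p : Part k l) : MV n k →ₗ[ℂ] MV n l :=
  Matrix.mulVecLin (Matrix.of fun (j : Fin l → Fin n) (i : Fin k → Fin n) => hatDelta p i j)

/-- The linear map `T_p^(n) : (ℂ^n)^{⊗k} → (ℂ^n)^{⊗l}` of Banica–Speicher. -/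
def softT (n : ℕ) {k l : ℕ} (p : Part k l) : MV n k →ₗ[ℂ] MV n l :=
  Matrix.mulVecLin (Matrix.of fun (j : Fin l → Fin n) (i : Fin k → Fin n) => softDelta p i j)

/-- The tensor product of linear maps, under the identification
`(ℂ^n)^{⊗k} ⊗ (ℂ^n)^{⊗k'} ≅ (ℂ^n)^{⊗(k+k')}` of basis vectors
`(e_{i} ⊗ e_{f} ↦ e_{if}`, concatenation of multi-indices). -/
def tensorMap {n k l k' l' : ℕ} (S : MV n k →ₗ[ℂ] MV n l) (T : MV n k' →ₗ[ℂ] MV n l') :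
    MV n (k + k') →ₗ[ℂ] MV n (l + l') :=
  Matrix.mulVecLin (Matrix.of fun (x : Fin (l + l') → Fin n) (y : Fin (k + k') → Fin n) =>
    LinearMap.toMatrix' S (fun a => x (Fin.castAdd l' a)) (fun a => y (Fin.castAdd k' a)) *
    LinearMap.toMatrix' T (fun b => x (Fin.natAdd l b)) (fun b => y (Fin.natAdd k b)))

/-- The adjoint of a linear map `(ℂ^n)^{⊗k} → (ℂ^n)^{⊗l}` with respect to the
standard Hermitian inner products (conjugate-transpose of the matrix in the
standard bases). -/
def adjointMap {n k l : ℕ} (S : MV n k →ₗ[ℂ] MV n l) : MV n l →ₗ[ℂ] MV n k :=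
  Matrix.mulVecLin (LinearMap.toMatrix' S).conjTranspose

/-- The map `ζ : ℂ → (ℂ^n)^{⊗2}`, `1 ↦ Σᵢ eᵢ ⊗ eᵢ`. -/
def zetaMap (n : ℕ) : MV n 0 →ₗ[ℂ] MV n 2 :=
  Matrix.mulVecLin (Matrix.of fun (j : Fin 2 → Fin n) (_ : Fin 0 → Fin n) =>
    if j 0 = j 1 then (1 : ℂ) else 0)

/-- A tensor category with duals (of subspaces of `Hom((ℂ^n)^{⊗k}, (ℂ^n)^{⊗l})`). -/
structure IsTensorCategoryWithDuals (n : ℕ)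
    (H : ∀ k l : ℕ, Submodule ℂ (MV n k →ₗ[ℂ] MV n l)) : Prop where
  tensor_mem : ∀ {k l k' l' : ℕ} (S : MV n k →ₗ[ℂ] MV n l) (T : MV n k' →ₗ[ℂ] MV n l'),
      S ∈ H k l → T ∈ H k' l' → tensorMap S T ∈ H (k + k') (l + l')
  comp_mem : ∀ {k l l' : ℕ} (S : MV n k →ₗ[ℂ] MV n l) (T : MV n l →ₗ[ℂ] MV n l'),
      S ∈ H k l → T ∈ H l l' → T ∘ₗ S ∈ H k l'
  adjoint_mem : ∀ {k l : ℕ} (S : MV n k →ₗ[ℂ] MV n l), S ∈ H k l → adjointMap S ∈ H l k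
  id_mem : LinearMap.id ∈ H 1 1
  zeta_mem : zetaMap n ∈ H 0 2

/-- The collection of subspaces `span{T̂_p^(n) : p ∈ R(k,l)}`. -/
def spanOf (n : ℕ) (R : ∀ k l : ℕ, Set (Part k l)) :
    ∀ k l : ℕ, Submodule ℂ (MV n k →ₗ[ℂ] MV n l) :=
  fun k l => Submodule.span ℂ {T | ∃ p ∈ R k l, T = hatT n p}

/-- All connected tensor products of `p` and `q`. -/
def connTensorSet {k l k' l' : ℕ} (p : Part k l) (q : Part k' l') :
    Set (Part (k + k') (l + l')) :=
  { r | ∃ (i : Fin k → ℕ) (j : Fin l → ℕ) (f : Fin k' → ℕ) (g : Fin l' → ℕ),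
      kerPart i j = p ∧ kerPart f g = q ∧ r = kerPart (Fin.append i f) (Fin.append j g) }

/-- All connected conditioned compositions of `p` and `q`. -/
def connCompSet {k l l' : ℕ} (p : Part k l) (q : Part l l') : Set (Part k l') :=
  { r | ∃ (i : Fin k → ℕ) (h : Fin l → ℕ) (g : Fin l' → ℕ),
      kerPart i h = p ∧ kerPart h g = q ∧ r = kerPart i g }

end GTQG
namespace GTQG

/-! ### Auxiliary lemmas for Statement 12 -/

section Aux

open Function

variable {α β γ : Type*}

theorem ker_comap (f : α → β) (g : β → γ) :
    Setoid.comap f (Setoid.ker g) = Setoid.ker (g ∘ f) :=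
  Setoid.ext fun _ _ => Iff.rfl

theorem ker_comp_inj {σ : β → γ} (hσ : Injective σ) (f : α → β) :
    Setoid.ker (σ ∘ f) = Setoid.ker f :=
  Setoid.ext fun _ _ => hσ.eq_iff

theorem kerPartA_def {k l : ℕ} (i : Fin k → α) (j : Fin l → α) :
    kerPartA i j = Setoid.ker (Sum.elim i j) := rfl

theorem kerPartA_rel {k l : ℕ} (i : Fin k → α) (j : Fin l → α) (x y : Fin k ⊕ Fin l) :
    kerPartA i j x y ↔ Sum.elim i j x = Sum.elim i j y := Iff.rfl

theorem elim_comp_inj {k l : ℕ} (σ : α → β) (i : Fin k → α) (j : Fin l → α) :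
    Sum.elim (σ ∘ i) (σ ∘ j) = σ ∘ Sum.elim i j := by
  funext x; cases x <;> rfl

theorem kerPartA_comp_inj {k l : ℕ} {σ : α → β} (hσ : Injective σ)
    (i : Fin k → α) (j : Fin l → α) :
    kerPartA (σ ∘ i) (σ ∘ j) = kerPartA i j := by
  rw [kerPartA_def, kerPartA_def, elim_comp_inj, ker_comp_inj hσ]

/-- Values of `Fin.append` in terms of `Fin.val`. -/
theorem append_val {a b : ℕ} (u : Fin a → β) (v : Fin b → β) (x : Fin (a + b)) :
    Fin.append u v x = if h : (x : ℕ) < a then u ⟨x, h⟩ else v ⟨(x : ℕ) - a, by omega⟩ := by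
  induction x using Fin.addCases with
  | left i =>
      rw [Fin.append_left, dif_pos (by simpa using i.isLt)]
      exact congrArg u (Fin.ext rfl)
  | right i =>
      rw [Fin.append_right, dif_neg (by simp)]
      congr 1
      ext
      simp

theorem append_fin0 {a : ℕ} (u : Fin a → β) (v : Fin 0 → β) :
    Fin.append u v = u := by
  funext x
  rw [append_val, dif_pos (by omega : (x : ℕ) < a)]
  exact congrArg u (Fin.ext rfl)

theorem fin0_append {b : ℕ} (u : Fin 0 → β) (v : Fin b → β) :
    Fin.append u v = v ∘ Fin.cast (Nat.zero_add b) := by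
  funext x
  rw [append_val, dif_neg (by omega)]
  rfl

/-- Splitting off the last entry of the left factor in a `snoc`-type append. -/
theorem append_snoc_eq {m : ℕ} (u : Fin (m + 1) → β) :
    Fin.append u (fun _ : Fin 1 => u (Fin.last m)) =
      Fin.append (u ∘ Fin.castSucc) (fun _ : Fin 2 => u (Fin.last m)) := by
  funext x
  rw [append_val, append_val]
  split_ifs with h1 h2 h2 <;>
    first
      | rfl
      | omega
      | (show u _ = u _; congr 1; ext; simp [Fin.last]; omega)

theorem append_one_comp_castSucc {m : ℕ} (u : Fin m → β) (x : β) :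
    (Fin.append u (fun _ : Fin 1 => x)) ∘ Fin.castSucc = u := by
  funext y
  have h : ((Fin.castSucc y : Fin (m + 1)) : ℕ) < m := by simp
  simp only [comp_apply]
  rw [append_val, dif_pos h]
  exact congrArg u (Fin.ext rfl)

theorem append_one_last {m : ℕ} (u : Fin m → β) (x : β) :
    Fin.append u (fun _ : Fin 1 => x) (Fin.last m) = x := by
  rw [append_val, dif_neg (by simp [Fin.last])]

theorem append_append_one {m : ℕ} (g : Fin m → β) (x : β) :
    Fin.append (Fin.append g (fun _ : Fin 1 => x)) (fun _ : Fin 1 => x) =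
      Fin.append g (fun _ : Fin 2 => x) := by
  funext y
  rw [append_val (Fin.append g fun _ : Fin 1 => x), append_val g]
  split_ifs with h1 h2 h2
  · rw [append_val, dif_pos h2]
  · rw [append_val, dif_neg h2]
  · omega
  · rfl

theorem append_comp_castAdd_natAdd {a b : ℕ} (u : Fin (a + b) → β) :
    Fin.append (u ∘ Fin.castAdd b) (u ∘ Fin.natAdd a) = u := by
  funext x
  induction x using Fin.addCases with
  | left i => rw [Fin.append_left]; rfl
  | right i => rw [Fin.append_right]; rfl

theorem append_castSucc_one {m : ℕ} (v : Fin (m + 1) → β) :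
    Fin.append (v ∘ Fin.castSucc) (fun _ : Fin 1 => v (Fin.last m)) = v := by
  funext x
  rw [append_val]
  split_ifs with h
  · exact congrArg v (Fin.ext rfl)
  · exact congrArg v (by ext; simp [Fin.last]; omega)

end Aux

end GTQG
namespace GTQG

section SkewComb

open Function

variable {R : ∀ k l : ℕ, Set (Part k l)}

theorem kerPart_const_const (c : ℕ) :
    kerPart (fun _ : Fin 1 => c) (fun _ : Fin 1 => c) = idPart := by
  apply Setoid.ext; intro a b
  constructor <;> intro _ <;> (cases a <;> cases b <;> rfl)

theorem kerPart_pair (c : ℕ) :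
    kerPart Fin.elim0 (fun _ : Fin 2 => c) = pairPart := by
  apply Setoid.ext; rintro (a | a) (b | b)
  · exact a.elim0
  · exact a.elim0
  · exact b.elim0
  · constructor <;> intro _ <;> rfl

theorem kerPart_pair_inv (c : ℕ) :
    kerPart (fun _ : Fin 2 => c) Fin.elim0 = invol pairPart := by
  apply Setoid.ext; rintro (a | a) (b | b)
  · constructor <;> intro _ <;> rfl
  · exact b.elim0
  · exact a.elim0
  · exact a.elim0

theorem compatible_ker {k l l' : ℕ} (i : Fin k → ℕ) (h : Fin l → ℕ) (g : Fin l' → ℕ) :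
    Compatible (kerPart i h) (kerPart h g) :=
  Setoid.ext fun _ _ => Iff.rfl

theorem middleJoin_ker {k l l' : ℕ} (i : Fin k → ℕ) (h : Fin l → ℕ) (g : Fin l' → ℕ)
    (hw : ∀ x y, i x = g y → ∃ m, h m = i x) :
    middleJoin (kerPart i h) (kerPart h g) =
      Setoid.ker (Sum.elim i (Sum.elim h g)) := by
  apply Setoid.ext; intro x y
  constructor
  · intro hxy
    induction hxy with
    | rel a b hab =>
        rcases hab with ⟨u, v, huv, rfl, rfl⟩ | ⟨u, v, huv, rfl, rfl⟩
        · cases u <;> cases v <;> exact huv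
        · cases u <;> cases v <;> exact huv
    | refl => rfl
    | symm _ _ _ ih => exact ih.symm
    | trans _ _ _ _ _ ih1 ih2 => exact ih1.trans ih2
  · intro hxy
    rcases x with a | m | b <;> rcases y with a' | m' | b'
    · exact .rel _ _ (Or.inl ⟨Sum.inl a, Sum.inl a', hxy, rfl, rfl⟩)
    · exact .rel _ _ (Or.inl ⟨Sum.inl a, Sum.inr m', hxy, rfl, rfl⟩)
    · obtain ⟨m, hm⟩ := hw a b' hxy
      exact .trans _ _ _ (.rel _ _ (Or.inl ⟨Sum.inl a, Sum.inr m, hm.symm, rfl, rfl⟩))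
        (.rel _ _ (Or.inr ⟨Sum.inl m, Sum.inr b', hm.trans hxy, rfl, rfl⟩))
    · exact .rel _ _ (Or.inl ⟨Sum.inr m, Sum.inl a', hxy, rfl, rfl⟩)
    · exact .rel _ _ (Or.inl ⟨Sum.inr m, Sum.inr m', hxy, rfl, rfl⟩)
    · exact .rel _ _ (Or.inr ⟨Sum.inl m, Sum.inr b', hxy, rfl, rfl⟩)
    · obtain ⟨m, hm⟩ := hw a' b hxy.symm
      exact .symm _ _ (.trans _ _ _
        (.rel _ _ (Or.inl ⟨Sum.inl a', Sum.inr m, hm.symm, rfl, rfl⟩))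
        (.rel _ _ (Or.inr ⟨Sum.inl m, Sum.inr b, hm.trans hxy.symm, rfl, rfl⟩)))
    · exact .rel _ _ (Or.inr ⟨Sum.inr b, Sum.inl m', hxy, rfl, rfl⟩)
    · exact .rel _ _ (Or.inr ⟨Sum.inr b, Sum.inr b', hxy, rfl, rfl⟩)

theorem compPart_ker {k l l' : ℕ} (i : Fin k → ℕ) (h : Fin l → ℕ) (g : Fin l' → ℕ)
    (hw : ∀ x y, i x = g y → ∃ m, h m = i x) :
    compPart (kerPart i h) (kerPart h g) = kerPart i g := by
  unfold compPart
  rw [middleJoin_ker i h g hw, ker_comap]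
  apply Setoid.ext; intro x y
  cases x <;> cases y <;> exact Iff.rfl

theorem part00_eq (p q : Part 0 0) : p = q :=
  Setoid.ext fun a _ => by cases a with
    | inl t => exact t.elim0
    | inr t => exact t.elim0

theorem empty_mem (hR : IsSkewCategory R) (p : Part 0 0) : p ∈ R 0 0 := by
  have h1 : Compatible pairPart (invol pairPart) := Setoid.ext fun _ _ => Iff.rfl
  have h2 := hR.cond_comp_mem hR.pair_mem (hR.invol_mem hR.pair_mem) h1
  rwa [part00_eq (compPart pairPart (invol pairPart)) p] at h2

theorem ker_refl_mem (hR : IsSkewCategory R) : ∀ (m : ℕ) (v : Fin m → ℕ), kerPart v v ∈ R m m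
  | 0, _ => empty_mem hR _
  | (m + 1), v => by
      have IH := ker_refl_mem hR m (v ∘ Fin.castSucc)
      have h2 := hR.conn_tensor_mem (v ∘ Fin.castSucc) (v ∘ Fin.castSucc)
        (fun _ : Fin 1 => v (Fin.last m)) (fun _ : Fin 1 => v (Fin.last m)) IH hR.id_mem rfl
        (kerPart_const_const _)
      rwa [append_castSucc_one] at h2

theorem rotDRU_mem (hR : IsSkewCategory R) {k l : ℕ} {i : Fin k → ℕ} {g : Fin (l + 1) → ℕ}
    (hp : kerPart i g ∈ R k (l + 1)) :
    kerPart (Fin.append i (fun _ : Fin 1 => g (Fin.last l))) (g ∘ Fin.castSucc)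
      ∈ R (k + 1) l := by
  have u_mem : kerPart (Fin.append i (fun _ : Fin 1 => g (Fin.last l)))
      (Fin.append g (fun _ : Fin 1 => g (Fin.last l))) ∈ R (k + 1) ((l + 1) + 1) :=
    hR.conn_tensor_mem i g _ _ hp hR.id_mem rfl (kerPart_const_const _)
  rw [append_snoc_eq g] at u_mem
  have q0_mem : kerPart (Fin.append (g ∘ Fin.castSucc) (fun _ : Fin 2 => g (Fin.last l)))
      (Fin.append (g ∘ Fin.castSucc) Fin.elim0) ∈ R (l + 2) (l + 0) :=
    hR.conn_tensor_mem (g ∘ Fin.castSucc) (g ∘ Fin.castSucc) _ Fin.elim0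
      (ker_refl_mem hR l _) (hR.invol_mem hR.pair_mem) rfl (kerPart_pair_inv _)
  rw [append_fin0] at q0_mem
  have h2 := hR.cond_comp_mem u_mem q0_mem (compatible_ker _ _ _)
  rwa [compPart_ker _ _ _
    (fun x y hxy => ⟨Fin.castAdd 2 y, by rw [Fin.append_left]; exact hxy.symm⟩)] at h2

theorem rotURD_mem (hR : IsSkewCategory R) {k l : ℕ} {i : Fin (k + 1) → ℕ} {g : Fin l → ℕ}
    (hp : kerPart i g ∈ R (k + 1) l) :
    kerPart (i ∘ Fin.castSucc) (Fin.append g (fun _ : Fin 1 => i (Fin.last k)))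
      ∈ R k (l + 1) := by
  have u_mem : kerPart (Fin.append i (fun _ : Fin 1 => i (Fin.last k)))
      (Fin.append g (fun _ : Fin 1 => i (Fin.last k))) ∈ R ((k + 1) + 1) (l + 1) :=
    hR.conn_tensor_mem i g _ _ hp hR.id_mem rfl (kerPart_const_const _)
  rw [append_snoc_eq i] at u_mem
  have W_mem : kerPart (Fin.append (i ∘ Fin.castSucc) Fin.elim0)
      (Fin.append (i ∘ Fin.castSucc) (fun _ : Fin 2 => i (Fin.last k))) ∈ R (k + 0) (k + 2) :=
    hR.conn_tensor_mem (i ∘ Fin.castSucc) (i ∘ Fin.castSucc) Fin.elim0 _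
      (ker_refl_mem hR k _) hR.pair_mem rfl (kerPart_pair _)
  rw [append_fin0] at W_mem
  have h2 := hR.cond_comp_mem W_mem u_mem (compatible_ker _ _ _)
  rwa [compPart_ker _ _ _
    (fun x _ _ => ⟨Fin.castAdd 2 x, Fin.append_left _ _ x⟩)] at h2

theorem mem_of_cast_bot {k a b : ℕ} (e : a = b) (i : Fin k → ℕ) (g : Fin b → ℕ)
    (hm : kerPart i (g ∘ Fin.cast e) ∈ R k a) : kerPart i g ∈ R k b := by
  subst e
  exact hm

theorem comp_closure (hR : IsSkewCategory R) :
    ∀ (l : ℕ) (h : Fin l → ℕ) {k l' : ℕ} (i : Fin k → ℕ) (g : Fin l' → ℕ),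
      kerPart i h ∈ R k l → kerPart h g ∈ R l l' → kerPart i g ∈ R k l'
  | 0, h, k, l', i, g, hp, hq => by
      have h2 := hR.conn_tensor_mem i h h g hp hq rfl rfl
      rw [append_fin0, fin0_append] at h2
      exact mem_of_cast_bot (Nat.zero_add l') i g h2
  | (l + 1), h, k, l', i, g, hp, hq => by
      have s1 := rotDRU_mem hR hp
      have s2 := rotURD_mem hR hq
      have s3 := comp_closure hR l (h ∘ Fin.castSucc) _ _ s1 s2
      have s4 := rotURD_mem hR s3
      rw [append_one_comp_castSucc, append_one_last, append_append_one] at s4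
      have E_mem : kerPart (Fin.append g (fun _ : Fin 2 => h (Fin.last l)))
          (Fin.append g Fin.elim0) ∈ R (l' + 2) (l' + 0) :=
        hR.conn_tensor_mem g g _ Fin.elim0 (ker_refl_mem hR l' g) (hR.invol_mem hR.pair_mem)
          rfl (kerPart_pair_inv _)
      rw [append_fin0] at E_mem
      have h5 := hR.cond_comp_mem s4 E_mem (compatible_ker _ _ _)
      rwa [compPart_ker _ _ _
        (fun x y hxy => ⟨Fin.castAdd 2 y, by rw [Fin.append_left]; exact hxy.symm⟩)] at h5

theorem connCompSet_subset (hR : IsSkewCategory R) {k l l' : ℕ} {p : Part k l} {q : Part l l'}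
    (hp : p ∈ R k l) (hq : q ∈ R l l') : connCompSet p q ⊆ R k l' := by
  rintro r ⟨i, h, g, h1, h2, rfl⟩
  exact comp_closure hR l h i g (by rw [h1]; exact hp) (by rw [h2]; exact hq)

theorem connTensorSet_subset (hR : IsSkewCategory R) {k l k' l' : ℕ}
    {p : Part k l} {q : Part k' l'} (hp : p ∈ R k l) (hq : q ∈ R k' l') :
    connTensorSet p q ⊆ R (k + k') (l + l') := by
  rintro r ⟨i, j, f, g, h1, h2, rfl⟩
  exact hR.conn_tensor_mem i j f g hp hq h1 h2

end SkewComb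

end GTQG
namespace GTQG

section MatrixLemmas

open Function

noncomputable instance partFintype {k l : ℕ} : Fintype (Part k l) :=
  Fintype.ofInjective (fun p : Part k l => (p : Fin k ⊕ Fin l → Fin k ⊕ Fin l → Prop))
    (fun p q h => Setoid.ext fun a b => by rw [show ⇑p = ⇑q from h])

variable {n k l k' l' : ℕ}

theorem toMatrix'_mulVecLin {a b : ℕ} (M : Matrix (Fin a → Fin n) (Fin b → Fin n) ℂ) :
    LinearMap.toMatrix' M.mulVecLin = M :=
  LinearMap.toMatrix'_toLin' M

theorem toMatrix'_hatT (p : Part k l) :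
    LinearMap.toMatrix' (hatT n p) =
      Matrix.of (fun (j : Fin l → Fin n) (i : Fin k → Fin n) => hatDelta p i j) :=
  toMatrix'_mulVecLin _

theorem invol_kerPartA {α : Type*} (i : Fin k → α) (j : Fin l → α) :
    invol (kerPartA i j) = kerPartA j i := by
  apply Setoid.ext; intro a b
  cases a <;> cases b <;> exact Iff.rfl

theorem invol_invol (p : Part k l) : invol (invol p) = p := by
  apply Setoid.ext; intro a b
  cases a <;> cases b <;> exact Iff.rfl

theorem kerPartA_eq_iff_invol {α : Type*} (i : Fin k → α) (j : Fin l → α) (p : Part k l) :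
    kerPartA j i = invol p ↔ kerPartA i j = p := by
  rw [← invol_kerPartA]
  constructor
  · intro h
    have := congrArg invol h
    rwa [invol_invol, invol_invol] at this
  · exact fun h => congrArg invol h

theorem hatT_idPart : hatT n idPart = (LinearMap.id : MV n 1 →ₗ[ℂ] MV n 1) := by
  apply LinearMap.toMatrix'.injective
  rw [toMatrix'_hatT, LinearMap.toMatrix'_id]
  ext j i
  rw [Matrix.of_apply, Matrix.one_apply, hatDelta]
  refine if_congr ?_ rfl rfl
  constructor
  · intro h
    have h0 : kerPartA i j (Sum.inl 0) (Sum.inr 0) := by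
      rw [h]; exact rfl
    funext x
    rw [Subsingleton.elim x 0]
    exact (h0 : i 0 = j 0).symm
  · intro hji
    apply Setoid.ext; intro a b
    have hval : ∀ x : Fin 1 ⊕ Fin 1, Sum.elim i j x = i 0 := by
      rintro (x | x) <;> rw [Subsingleton.elim x 0]
      · rfl
      · exact congrFun hji 0
    constructor
    · intro _
      cases a <;> cases b <;> rfl
    · intro _
      show Sum.elim i j a = Sum.elim i j b
      rw [hval a, hval b]

theorem hatT_pairPart : hatT n pairPart = zetaMap n := by
  apply LinearMap.toMatrix'.injective
  rw [toMatrix'_hatT]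
  unfold zetaMap
  rw [toMatrix'_mulVecLin]
  ext j i
  rw [Matrix.of_apply, Matrix.of_apply, hatDelta]
  refine if_congr ?_ rfl rfl
  constructor
  · intro h
    have h0 : kerPartA i j (Sum.inr 0) (Sum.inr 1) := by
      rw [h]; exact rfl
    exact h0
  · intro h
    apply Setoid.ext
    rintro (a | a) (b | b)
    · exact a.elim0
    · exact a.elim0
    · exact b.elim0
    · simp only [kerPartA_rel]
      constructor
      · intro _; rfl
      · intro _
        show j a = j b
        have : ∀ x : Fin 2, j x = j 0 := by
          intro x
          match x with
          | 0 => rfl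
          | 1 => exact h.symm
        rw [this a, this b]

theorem adjointMap_hatT (p : Part k l) :
    adjointMap (hatT n p) = hatT n (invol p) := by
  apply LinearMap.toMatrix'.injective
  unfold adjointMap
  rw [toMatrix'_mulVecLin, toMatrix'_hatT, toMatrix'_hatT]
  ext i j
  rw [Matrix.conjTranspose_apply, Matrix.of_apply, Matrix.of_apply]
  unfold hatDelta
  rw [show (kerPartA j i = invol p) = (kerPartA i j = p) from propext (kerPartA_eq_iff_invol ..)]
  split_ifs <;> simp

theorem adjointMap_add (S T : MV n k →ₗ[ℂ] MV n l) :
    adjointMap (S + T) = adjointMap S + adjointMap T := by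
  unfold adjointMap
  rw [map_add, Matrix.conjTranspose_add, Matrix.mulVecLin_add]

theorem adjointMap_smul (c : ℂ) (S : MV n k →ₗ[ℂ] MV n l) :
    adjointMap (c • S) = star c • adjointMap S := by
  unfold adjointMap
  rw [map_smul, Matrix.conjTranspose_smul]
  ext v x
  simp [Matrix.mulVecLin_apply, Matrix.smul_mulVec]

theorem adjointMap_zero : adjointMap (0 : MV n k →ₗ[ℂ] MV n l) = 0 := by
  unfold adjointMap
  rw [map_zero, Matrix.conjTranspose_zero, Matrix.mulVecLin_zero]

theorem hatT_apply_single (p : Part k l) (i₀ : Fin k → Fin n) (j : Fin l → Fin n) :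
    hatT n p (fun i => if i = i₀ then 1 else 0) j = hatDelta p i₀ j := by
  show (Matrix.mulVecLin _) _ j = _
  rw [Matrix.mulVecLin_apply]
  show ∑ i, Matrix.of (fun (j : Fin l → Fin n) (i : Fin k → Fin n) => hatDelta p i j) j i *
    (if i = i₀ then 1 else 0) = _
  rw [Finset.sum_eq_single i₀]
  · rw [if_pos rfl, mul_one]; rfl
  · intro b _ hb
    rw [if_neg hb, mul_zero]
  · intro hmem
    exact absurd (Finset.mem_univ i₀) hmem

end MatrixLemmas

end GTQG
namespace GTQG

section Formulas

open Function

variable {n k l k' l' : ℕ}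

theorem append_comp_castAdd {a b : ℕ} {β : Type*} (u : Fin a → β) (v : Fin b → β) :
    Fin.append u v ∘ Fin.castAdd b = u := by
  funext t; exact Fin.append_left u v t

theorem append_comp_natAdd {a b : ℕ} {β : Type*} (u : Fin a → β) (v : Fin b → β) :
    Fin.append u v ∘ Fin.natAdd a = v := by
  funext t; exact Fin.append_right u v t

theorem comap_restrict_left {α : Type*} (u : Fin (k + k') → α) (v : Fin (l + l') → α) :
    Setoid.comap (Sum.map (Fin.castAdd k') (Fin.castAdd l')) (kerPartA u v) =
      kerPartA (u ∘ Fin.castAdd k') (v ∘ Fin.castAdd l') := by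
  apply Setoid.ext; intro a b
  cases a <;> cases b <;> exact Iff.rfl

theorem comap_restrict_right {α : Type*} (u : Fin (k + k') → α) (v : Fin (l + l') → α) :
    Setoid.comap (Sum.map (Fin.natAdd k) (Fin.natAdd l)) (kerPartA u v) =
      kerPartA (u ∘ Fin.natAdd k) (v ∘ Fin.natAdd l) := by
  apply Setoid.ext; intro a b
  cases a <;> cases b <;> exact Iff.rfl

theorem connTensor_iff (p : Part k l) (q : Part k' l') (y : Fin (k + k') → Fin n)
    (x : Fin (l + l') → Fin n) :
    kerPartA y x ∈ connTensorSet p q ↔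
      (kerPartA (y ∘ Fin.castAdd k') (x ∘ Fin.castAdd l') = p ∧
       kerPartA (y ∘ Fin.natAdd k) (x ∘ Fin.natAdd l) = q) := by
  constructor
  · rintro ⟨i, j, f, g, h1, h2, h3⟩
    constructor
    · rw [← h1, ← comap_restrict_left y x, h3, comap_restrict_left]
      rw [append_comp_castAdd, append_comp_castAdd]
    · rw [← h2, ← comap_restrict_right y x, h3, comap_restrict_right]
      rw [append_comp_natAdd, append_comp_natAdd]
  · rintro ⟨h1, h2⟩
    refine ⟨(Fin.val ∘ y) ∘ Fin.castAdd k', (Fin.val ∘ x) ∘ Fin.castAdd l',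
      (Fin.val ∘ y) ∘ Fin.natAdd k, (Fin.val ∘ x) ∘ Fin.natAdd l, ?_, ?_, ?_⟩
    · exact (kerPartA_comp_inj Fin.val_injective (y ∘ Fin.castAdd k')
        (x ∘ Fin.castAdd l')).trans h1
    · exact (kerPartA_comp_inj Fin.val_injective (y ∘ Fin.natAdd k)
        (x ∘ Fin.natAdd l)).trans h2
    · rw [append_comp_castAdd_natAdd (Fin.val ∘ y), append_comp_castAdd_natAdd (Fin.val ∘ x)]
      exact (kerPartA_comp_inj Fin.val_injective y x).symm

theorem tensorMap_hatT (p : Part k l) (q : Part k' l') :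
    tensorMap (hatT n p) (hatT n q) =
      ∑ r ∈ Finset.univ.filter (fun r => r ∈ connTensorSet p q), hatT n r := by
  apply LinearMap.toMatrix'.injective
  rw [map_sum]
  unfold tensorMap
  rw [toMatrix'_mulVecLin]
  ext x y
  rw [Matrix.sum_apply]
  rw [show ∑ r ∈ Finset.univ.filter (fun r => r ∈ connTensorSet p q),
        LinearMap.toMatrix' (hatT n r) x y
      = ∑ r ∈ Finset.univ.filter (fun r => r ∈ connTensorSet p q),
        (if kerPartA y x = r then (1 : ℂ) else 0) from
    Finset.sum_congr rfl fun r _ => by rw [toMatrix'_hatT]; rfl]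
  rw [Matrix.of_apply, toMatrix'_hatT, toMatrix'_hatT]
  show hatDelta p _ _ * hatDelta q _ _ = _
  unfold hatDelta
  simp only [show (fun a => y (Fin.castAdd k' a)) = y ∘ Fin.castAdd k' from rfl,
    show (fun a => x (Fin.castAdd l' a)) = x ∘ Fin.castAdd l' from rfl,
    show (fun b => y (Fin.natAdd k b)) = y ∘ Fin.natAdd k from rfl,
    show (fun b => x (Fin.natAdd l b)) = x ∘ Fin.natAdd l from rfl]
  by_cases hmem : kerPartA y x ∈ connTensorSet p q
  · obtain ⟨h1, h2⟩ := (connTensor_iff p q y x).mp hmem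
    rw [Finset.sum_eq_single_of_mem (kerPartA y x)
      (Finset.mem_filter.mpr ⟨Finset.mem_univ _, hmem⟩) (fun r _ hr => if_neg (Ne.symm hr))]
    rw [if_pos rfl, if_pos h1, if_pos h2, one_mul]
  · rw [Finset.sum_eq_zero (fun r hr => if_neg ?_)]
    · rcases (not_and_or.mp (fun hc => hmem ((connTensor_iff p q y x).mpr hc))) with h | h
      · rw [if_neg h, zero_mul]
      · rw [if_neg h, mul_zero]
    · intro hK
      exact hmem (hK ▸ (Finset.mem_filter.mp hr).2)

end Formulas

end GTQG
namespace GTQG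

section CompFormula

open Function

variable {n k l k' l' : ℕ}

theorem exists_perm_of_ker_eq {α : Type*} {f g : α → Fin n}
    (h : Setoid.ker f = Setoid.ker g) : ∃ σ : Equiv.Perm (Fin n), f = σ ∘ g := by
  have hk : ∀ a b : α, f a = f b ↔ g a = g b := fun a b => Setoid.ext_iff.mp h a b
  let e : {x // x ∈ Set.range g} ≃ {x // x ∈ Set.range f} :=
    { toFun := fun y => ⟨f (Classical.choose y.2), Set.mem_range_self _⟩
      invFun := fun y => ⟨g (Classical.choose y.2), Set.mem_range_self _⟩
      left_inv := by
        rintro ⟨yv, hy⟩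
        apply Subtype.ext
        show g (Classical.choose (Set.mem_range_self _ : _ ∈ Set.range f)) = yv
        have h2 : f (Classical.choose (Set.mem_range_self
            (f := f) (Classical.choose hy))) = f (Classical.choose hy) :=
          Classical.choose_spec (Set.mem_range_self _)
        rw [(hk _ _).mp h2]
        exact Classical.choose_spec hy
      right_inv := by
        rintro ⟨yv, hy⟩
        apply Subtype.ext
        show f (Classical.choose (Set.mem_range_self _ : _ ∈ Set.range g)) = yv
        have h2 : g (Classical.choose (Set.mem_range_self
            (f := g) (Classical.choose hy))) = g (Classical.choose hy) :=
          Classical.choose_spec (Set.mem_range_self _)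
        rw [(hk _ _).mpr h2]
        exact Classical.choose_spec hy }
  refine ⟨e.extendSubtype, funext fun a => ?_⟩
  show f a = e.extendSubtype (g a)
  rw [e.extendSubtype_apply_of_mem (g a) (Set.mem_range_self a)]
  show f a = f (Classical.choose (Set.mem_range_self a))
  exact (hk _ _).mpr (Classical.choose_spec (Set.mem_range_self a)).symm

/-- The number of middle labellings compatible with `(p, q)` over outer labels `(i, g)`. -/
def hCount (n : ℕ) {k l l' : ℕ} (p : Part k l) (q : Part l l')
    (i : Fin k → Fin n) (g : Fin l' → Fin n) : ℕ :=
  Nat.card {h : Fin l → Fin n // kerPartA i h = p ∧ kerPartA h g = q}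

/-- The coefficient of `T̂_r` in `T̂_q T̂_p`. -/
def compCoeff (n : ℕ) {k l l' : ℕ} (p : Part k l) (q : Part l l') (r : Part k l') : ℕ :=
  if hr : ∃ ig : (Fin k → Fin n) × (Fin l' → Fin n), kerPartA ig.1 ig.2 = r then
    hCount n p q hr.choose.1 hr.choose.2
  else 0

theorem hCount_congr (p : Part k l) (q : Part l l') {i i₀ : Fin k → Fin n}
    {g g₀ : Fin l' → Fin n} (hker : kerPartA i g = kerPartA i₀ g₀) :
    hCount n p q i g = hCount n p q i₀ g₀ := by
  obtain ⟨σ, hσ⟩ := exists_perm_of_ker_eq (f := Sum.elim i g) (g := Sum.elim i₀ g₀) hker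
  have hi : i = ⇑σ ∘ i₀ := funext fun t => congrFun hσ (Sum.inl t)
  have hg : g = ⇑σ ∘ g₀ := funext fun t => congrFun hσ (Sum.inr t)
  have cancel : ∀ {m : ℕ} (u : Fin m → Fin n), ⇑σ ∘ (⇑σ.symm ∘ u) = u :=
    fun u => funext fun t => σ.apply_symm_apply _
  apply Nat.card_congr
  refine
    { toFun := fun h => ⟨⇑σ.symm ∘ h.1, ?_, ?_⟩
      invFun := fun h => ⟨⇑σ ∘ h.1, ?_, ?_⟩
      left_inv := fun h => Subtype.ext (funext fun t => σ.apply_symm_apply _)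
      right_inv := fun h => Subtype.ext (funext fun t => σ.symm_apply_apply _) }
  · calc kerPartA i₀ (⇑σ.symm ∘ h.1)
        = kerPartA (⇑σ ∘ i₀) (⇑σ ∘ (⇑σ.symm ∘ h.1)) :=
          (kerPartA_comp_inj σ.injective _ _).symm
      _ = kerPartA (⇑σ ∘ i₀) h.1 := by rw [cancel]
      _ = p := by rw [← hi]; exact h.2.1
  · calc kerPartA (⇑σ.symm ∘ h.1) g₀
        = kerPartA (⇑σ ∘ (⇑σ.symm ∘ h.1)) (⇑σ ∘ g₀) :=
          (kerPartA_comp_inj σ.injective _ _).symm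
      _ = kerPartA h.1 (⇑σ ∘ g₀) := by rw [cancel]
      _ = q := by rw [← hg]; exact h.2.2
  · calc kerPartA i (⇑σ ∘ h.1) = kerPartA (⇑σ ∘ i₀) (⇑σ ∘ h.1) := by rw [← hi]
      _ = kerPartA i₀ h.1 := kerPartA_comp_inj σ.injective _ _
      _ = p := h.2.1
  · calc kerPartA (⇑σ ∘ h.1) g = kerPartA (⇑σ ∘ h.1) (⇑σ ∘ g₀) := by rw [← hg]
      _ = kerPartA h.1 g₀ := kerPartA_comp_inj σ.injective _ _
      _ = q := h.2.2

theorem hCount_eq_compCoeff (p : Part k l) (q : Part l l')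
    (i : Fin k → Fin n) (g : Fin l' → Fin n) :
    hCount n p q i g = compCoeff n p q (kerPartA i g) := by
  have hex : ∃ ig : (Fin k → Fin n) × (Fin l' → Fin n),
      kerPartA ig.1 ig.2 = kerPartA i g := ⟨(i, g), rfl⟩
  rw [compCoeff, dif_pos hex]
  exact hCount_congr p q hex.choose_spec.symm

theorem comp_hatT (p : Part k l) (q : Part l l') :
    (hatT n q) ∘ₗ (hatT n p) = ∑ r : Part k l', (compCoeff n p q r : ℂ) • hatT n r := by
  apply LinearMap.toMatrix'.injective
  rw [LinearMap.toMatrix'_comp, map_sum, toMatrix'_hatT, toMatrix'_hatT]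
  ext g i
  rw [Matrix.mul_apply, Matrix.sum_apply]
  have lhs_eq : ∀ h : Fin l → Fin n,
      (Matrix.of fun (jj : Fin l' → Fin n) (ii : Fin l → Fin n) => hatDelta q ii jj) g h *
      (Matrix.of fun (jj : Fin l → Fin n) (ii : Fin k → Fin n) => hatDelta p ii jj) h i =
      if kerPartA i h = p ∧ kerPartA h g = q then (1 : ℂ) else 0 := by
    intro h
    rw [Matrix.of_apply, Matrix.of_apply]
    unfold hatDelta
    by_cases h1 : kerPartA i h = p <;> by_cases h2 : kerPartA h g = q <;>
      simp [h1, h2]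
  rw [Finset.sum_congr rfl fun h _ => lhs_eq h, Finset.sum_boole]
  have card_eq : (Finset.univ.filter
      (fun h : Fin l → Fin n => kerPartA i h = p ∧ kerPartA h g = q)).card =
      hCount n p q i g := by
    rw [hCount, Nat.card_eq_fintype_card, Fintype.card_subtype]
  rw [card_eq, hCount_eq_compCoeff]
  have rhs_eq : ∀ r : Part k l',
      LinearMap.toMatrix' ((compCoeff n p q r : ℂ) • hatT n r) g i =
      (compCoeff n p q r : ℂ) * (if kerPartA i g = r then 1 else 0) := by
    intro r
    rw [map_smul, Matrix.smul_apply, toMatrix'_hatT]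
    rfl
  rw [Finset.sum_congr rfl fun r _ => rhs_eq r,
    Finset.sum_eq_single (kerPartA i g)
      (fun r _ hr => by rw [if_neg (Ne.symm hr), mul_zero])
      (fun hmem => absurd (Finset.mem_univ _) hmem),
    if_pos rfl, mul_one]

theorem compCoeff_ne_zero_mem {R : ∀ k l : ℕ, Set (Part k l)} (hR : IsSkewCategory R)
    {p : Part k l} {q : Part l l'} (hp : p ∈ R k l) (hq : q ∈ R l l')
    (r : Part k l') (hc : compCoeff n p q r ≠ 0) : r ∈ R k l' := by
  rw [compCoeff] at hc
  split_ifs at hc with hr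
  swap
  · exact absurd rfl hc
  obtain ⟨⟨h, h1, h2⟩⟩ := (Nat.card_ne_zero.mp hc).1
  have hrk : kerPartA hr.choose.1 hr.choose.2 = r := hr.choose_spec
  have e1 : kerPart (Fin.val ∘ hr.choose.1) (Fin.val ∘ h) = p :=
    (kerPartA_comp_inj Fin.val_injective _ _).trans h1
  have e2 : kerPart (Fin.val ∘ h) (Fin.val ∘ hr.choose.2) = q :=
    (kerPartA_comp_inj Fin.val_injective _ _).trans h2
  have e3 : kerPart (Fin.val ∘ hr.choose.1) (Fin.val ∘ hr.choose.2) = r :=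
    (kerPartA_comp_inj Fin.val_injective _ _).trans hrk
  rw [← e3]
  exact comp_closure hR l (Fin.val ∘ h) _ _ (by rw [e1]; exact hp) (by rw [e2]; exact hq)

end CompFormula

end GTQG
namespace GTQG

section Extraction

open Function

variable {n k l : ℕ}

theorem exists_labelling (r : Part k l) (hn : k + l ≤ n) :
    ∃ (i : Fin k → Fin n) (j : Fin l → Fin n), kerPartA i j = r := by
  have hsurj : Function.Surjective (Quotient.mk r) := fun q => Quot.exists_rep q
  have hcard : Fintype.card (Quotient r) ≤ n := by
    calc Fintype.card (Quotient r) ≤ Fintype.card (Fin k ⊕ Fin l) :=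
          Fintype.card_le_of_surjective _ hsurj
      _ = k + l := by simp
      _ ≤ n := hn
  obtain ⟨emb⟩ : Nonempty (Quotient r ↪ Fin n) :=
    Function.Embedding.nonempty_of_card_le (by simpa using hcard)
  refine ⟨fun a => emb (Quotient.mk r (Sum.inl a)), fun b => emb (Quotient.mk r (Sum.inr b)), ?_⟩
  have key : ∀ x : Fin k ⊕ Fin l,
      Sum.elim (fun a => emb (Quotient.mk r (Sum.inl a)))
        (fun b => emb (Quotient.mk r (Sum.inr b))) x = emb (Quotient.mk r x) := by
    rintro (a | b) <;> rfl
  apply Setoid.ext; intro a b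
  rw [kerPartA_rel, key, key, emb.apply_eq_iff_eq]
  exact Quotient.eq''

theorem extract_mem {R : ∀ k l : ℕ, Set (Part k l)} (w : Part k l → ℂ)
    (hspan : (∑ r : Part k l, w r • hatT n r) ∈ spanOf n R k l)
    (r₀ : Part k l) (hw : w r₀ ≠ 0) (i₀ : Fin k → Fin n) (j₀ : Fin l → Fin n)
    (hker : kerPartA i₀ j₀ = r₀) : r₀ ∈ R k l := by
  by_contra hr₀
  have hev : ∀ S, S ∈ spanOf n R k l → S (fun i => if i = i₀ then (1 : ℂ) else 0) j₀ = 0 := by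
    intro S hS
    induction hS using Submodule.span_induction with
    | mem T hT =>
        obtain ⟨p, hp, rfl⟩ := hT
        rw [hatT_apply_single, hatDelta, if_neg]
        intro hK
        exact hr₀ ((hK.symm.trans hker) ▸ hp)
    | zero => rfl
    | add x y _ _ ihx ihy =>
        rw [LinearMap.add_apply, Pi.add_apply, ihx, ihy, add_zero]
    | smul a x _ ih =>
        rw [LinearMap.smul_apply, Pi.smul_apply, ih, smul_zero]
  have h0 := hev _ hspan
  rw [LinearMap.sum_apply, Finset.sum_apply] at h0
  have heach : ∀ r : Part k l,
      (w r • hatT n r) (fun i => if i = i₀ then (1 : ℂ) else 0) j₀ =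
      w r * (if kerPartA i₀ j₀ = r then 1 else 0) := by
    intro r
    rw [LinearMap.smul_apply, Pi.smul_apply, hatT_apply_single, smul_eq_mul]
    rfl
  rw [Finset.sum_congr rfl fun r _ => heach r,
    Finset.sum_eq_single r₀
      (fun r _ hr => by rw [hker, if_neg (fun hh => hr hh.symm), mul_zero])
      (fun hmem => absurd (Finset.mem_univ _) hmem),
    hker, if_pos rfl, mul_one] at h0
  exact hw h0

theorem extract_mem_single {R : ∀ k l : ℕ, Set (Part k l)}
    (r₀ : Part k l) (hspan : hatT n r₀ ∈ spanOf n R k l)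
    (i₀ : Fin k → Fin n) (j₀ : Fin l → Fin n)
    (hker : kerPartA i₀ j₀ = r₀) : r₀ ∈ R k l := by
  refine extract_mem (fun r => if r₀ = r then (1 : ℂ) else 0) ?_ r₀ (by simp) i₀ j₀ hker
  rw [show (∑ r : Part k l, (if r₀ = r then (1 : ℂ) else 0) • hatT n r) = hatT n r₀ by
    rw [Finset.sum_eq_single r₀
      (fun r _ hr => by rw [if_neg (Ne.symm hr), zero_smul])
      (fun hmem => absurd (Finset.mem_univ _) hmem), if_pos rfl, one_smul]]
  exact hspan

end Extraction

end GTQG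
namespace GTQG

section JoinLabelling

open Function

variable {k l l' : ℕ} {p : Part k l} {q : Part l l'}

theorem eqvGen_le_ker {α β : Type*} {r : α → α → Prop} {φ : α → β}
    (h : ∀ x y, r x y → φ x = φ y) : ∀ x y, Relation.EqvGen r x y → φ x = φ y := by
  intro x y hxy
  induction hxy with
  | rel a b hab => exact h a b hab
  | refl => rfl
  | symm _ _ _ ih => exact ih.symm
  | trans _ _ _ _ _ ih1 ih2 => exact ih1.trans ih2

/-- Projection used to show that the middle join restricted to the top points is `p`. -/
private def phiTop (p : Part k l) (q : Part l l') :
    CompCarrier k l l' → Quotient p ⊕ Quotient (lowerSetoid q) := fun x =>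
  match x with
  | .inl a => .inl (Quotient.mk p (.inl a))
  | .inr (.inl m) => .inl (Quotient.mk p (.inr m))
  | .inr (.inr b) =>
      if hb : ∃ m : Fin l, q (.inl m) (.inr b) then .inl (Quotient.mk p (.inr hb.choose))
      else .inr (Quotient.mk (lowerSetoid q) b)

private theorem hc_up_down (hc : Compatible p q) {m m' : Fin l}
    (h : q (.inl m) (.inl m')) : p (.inr m) (.inr m') :=
  (Setoid.ext_iff.mp hc m m').mpr h

private theorem hc_down_up (hc : Compatible p q) {m m' : Fin l}
    (h : p (.inr m) (.inr m')) : q (.inl m) (.inl m') :=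
  (Setoid.ext_iff.mp hc m m').mp h

private theorem phiTop_compRel (hc : Compatible p q) :
    ∀ x y, compRel p q x y → phiTop p q x = phiTop p q y := by
  rintro x y (⟨u, v, huv, rfl, rfl⟩ | ⟨u, v, huv, rfl, rfl⟩)
  · cases u <;> cases v <;> exact congrArg Sum.inl (Quotient.sound huv)
  · rcases u with m | b <;> rcases v with m' | b'
    · exact congrArg Sum.inl (Quotient.sound (hc_up_down hc huv))
    · show Sum.inl (Quotient.mk p (.inr m)) = phiTop p q (.inr (.inr b'))
      have hb' : ∃ m'' : Fin l, q (.inl m'') (.inr b') := ⟨m, huv⟩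
      show _ = dite _ _ _
      rw [dif_pos hb']
      refine congrArg Sum.inl (Quotient.sound (hc_up_down hc ?_))
      exact q.trans huv (q.symm hb'.choose_spec)
    · show phiTop p q (.inr (.inr b)) = Sum.inl (Quotient.mk p (.inr m'))
      have hb : ∃ m'' : Fin l, q (.inl m'') (.inr b) := ⟨m', q.symm huv⟩
      show dite _ _ _ = _
      rw [dif_pos hb]
      refine congrArg Sum.inl (Quotient.sound (hc_up_down hc ?_))
      exact q.trans hb.choose_spec huv
    · show phiTop p q (.inr (.inr b)) = phiTop p q (.inr (.inr b'))
      by_cases hb : ∃ m'' : Fin l, q (.inl m'') (.inr b)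
      · have hb' : ∃ m'' : Fin l, q (.inl m'') (.inr b') := ⟨hb.choose, q.trans hb.choose_spec huv⟩
        show dite _ _ _ = dite _ _ _
        rw [dif_pos hb, dif_pos hb']
        refine congrArg Sum.inl (Quotient.sound (hc_up_down hc ?_))
        exact q.trans hb.choose_spec (q.trans huv (q.symm hb'.choose_spec))
      · have hb' : ¬∃ m'' : Fin l, q (.inl m'') (.inr b') := by
          rintro ⟨m'', hm⟩
          exact hb ⟨m'', q.trans hm (q.symm huv)⟩
        show dite _ _ _ = dite _ _ _
        rw [dif_neg hb, dif_neg hb']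
        exact congrArg Sum.inr (Quotient.sound huv)

theorem comap_topIncl_middleJoin (hc : Compatible p q) :
    Setoid.comap (topIncl (l' := l')) (middleJoin p q) = p := by
  apply Setoid.ext; intro u v
  constructor
  · intro hj
    have hphi := eqvGen_le_ker (phiTop_compRel hc) _ _ hj
    have hform : ∀ w : Fin k ⊕ Fin l,
        phiTop p q (topIncl (l' := l') w) = Sum.inl (Quotient.mk p w) := by
      rintro (a | m) <;> rfl
    rw [hform, hform] at hphi
    exact Quotient.eq''.mp (Sum.inl_injective hphi)
  · intro hpv
    exact Relation.EqvGen.rel _ _ (Or.inl ⟨u, v, hpv, rfl, rfl⟩)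

/-- Projection used to show that the middle join restricted to the bottom points is `q`. -/
private def phiBot (p : Part k l) (q : Part l l') :
    CompCarrier k l l' → Quotient q ⊕ Quotient (upperSetoid p) := fun x =>
  match x with
  | .inr w => .inl (Quotient.mk q w)
  | .inl a =>
      if ha : ∃ m : Fin l, p (.inl a) (.inr m) then .inl (Quotient.mk q (.inl ha.choose))
      else .inr (Quotient.mk (upperSetoid p) a)

private theorem phiBot_compRel (hc : Compatible p q) :
    ∀ x y, compRel p q x y → phiBot p q x = phiBot p q y := by
  rintro x y (⟨u, v, huv, rfl, rfl⟩ | ⟨u, v, huv, rfl, rfl⟩)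
  · rcases u with a | m <;> rcases v with a' | m' <;> simp only [topIncl, Sum.map_inl, Sum.map_inr, id_eq]
    · show dite _ _ _ = dite _ _ _
      by_cases ha : ∃ m'' : Fin l, p (.inl a) (.inr m'')
      · have ha' : ∃ m'' : Fin l, p (.inl a') (.inr m'') := ⟨ha.choose, p.trans (p.symm huv) ha.choose_spec⟩
        rw [dif_pos ha, dif_pos ha']
        refine congrArg Sum.inl (Quotient.sound (hc_down_up hc ?_))
        exact p.trans (p.symm ha.choose_spec) (p.trans huv ha'.choose_spec)
      · have ha' : ¬∃ m'' : Fin l, p (.inl a') (.inr m'') := by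
          rintro ⟨m'', hm⟩
          exact ha ⟨m'', p.trans huv hm⟩
        rw [dif_neg ha, dif_neg ha']
        exact congrArg Sum.inr (Quotient.sound huv)
    · show dite _ _ _ = Sum.inl (Quotient.mk q (.inl m'))
      have ha : ∃ m'' : Fin l, p (.inl a) (.inr m'') := ⟨m', huv⟩
      rw [dif_pos ha]
      refine congrArg Sum.inl (Quotient.sound (hc_down_up hc ?_))
      exact p.trans (p.symm ha.choose_spec) huv
    · show Sum.inl (Quotient.mk q (.inl m)) = dite _ _ _
      have ha' : ∃ m'' : Fin l, p (.inl a') (.inr m'') := ⟨m, p.symm huv⟩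
      rw [dif_pos ha']
      refine congrArg Sum.inl (Quotient.sound (hc_down_up hc ?_))
      exact p.trans huv ha'.choose_spec
    · exact congrArg Sum.inl (Quotient.sound (hc_down_up hc huv))
  · cases u <;> cases v <;> exact congrArg Sum.inl (Quotient.sound huv)

theorem comap_botIncl_middleJoin (hc : Compatible p q) :
    Setoid.comap (botIncl (k := k)) (middleJoin p q) = q := by
  apply Setoid.ext; intro u v
  constructor
  · intro hj
    have hphi := eqvGen_le_ker (phiBot_compRel hc) _ _ hj
    exact Quotient.eq''.mp (Sum.inl_injective hphi)
  · intro hqv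
    exact Relation.EqvGen.rel _ _ (Or.inr ⟨u, v, hqv, rfl, rfl⟩)

theorem exists_compatible_labelling (p : Part k l) (q : Part l l') {n : ℕ}
    (hc : Compatible p q) (hn : k + (l + l') ≤ n) :
    ∃ (i : Fin k → Fin n) (h : Fin l → Fin n) (g : Fin l' → Fin n),
      kerPartA i h = p ∧ kerPartA h g = q ∧ kerPartA i g = compPart p q := by
  have hsurj : Function.Surjective (Quotient.mk (middleJoin p q)) := fun x => Quot.exists_rep x
  have hcard : Fintype.card (Quotient (middleJoin p q)) ≤ n := by
    calc Fintype.card (Quotient (middleJoin p q)) ≤ Fintype.card (CompCarrier k l l') :=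
          Fintype.card_le_of_surjective _ hsurj
      _ = k + (l + l') := by simp
      _ ≤ n := hn
  obtain ⟨emb⟩ : Nonempty (Quotient (middleJoin p q) ↪ Fin n) :=
    Function.Embedding.nonempty_of_card_le (by simpa using hcard)
  set L : CompCarrier k l l' → Fin n := fun x => emb (Quotient.mk (middleJoin p q) x) with hL
  have hLiff : ∀ x y, L x = L y ↔ middleJoin p q x y := by
    intro x y
    rw [hL]
    simp only [emb.apply_eq_iff_eq]
    exact Quotient.eq''
  refine ⟨fun a => L (.inl a), fun m => L (.inr (.inl m)), fun b => L (.inr (.inr b)),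
    ?_, ?_, ?_⟩
  · rw [← comap_topIncl_middleJoin hc]
    apply Setoid.ext; intro u v
    rw [kerPartA_rel]
    have hform : ∀ w : Fin k ⊕ Fin l,
        Sum.elim (fun a => L (.inl a)) (fun m => L (.inr (.inl m))) w
          = L (topIncl (l' := l') w) := by rintro (a | m) <;> rfl
    rw [hform, hform, hLiff]
    exact Iff.rfl
  · rw [← comap_botIncl_middleJoin (p := p) hc]
    apply Setoid.ext; intro u v
    rw [kerPartA_rel]
    have hform : ∀ w : Fin l ⊕ Fin l',
        Sum.elim (fun m => L (.inr (.inl m))) (fun b => L (.inr (.inr b))) w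
          = L (botIncl (k := k) w) := by rintro (m | b) <;> rfl
    rw [hform, hform, hLiff]
    exact Iff.rfl
  · apply Setoid.ext; intro u v
    rw [kerPartA_rel]
    have hform : ∀ w : Fin k ⊕ Fin l',
        Sum.elim (fun a => L (.inl a)) (fun b => L (.inr (.inr b))) w
          = L (Sum.map id Sum.inr w) := by rintro (a | b) <;> rfl
    rw [hform, hform, hLiff]
    exact Iff.rfl

end JoinLabelling

end GTQG
namespace GTQG

section SpanClosure

open Function Submodule

variable {n k l k' l' : ℕ} {R : ∀ k l : ℕ, Set (Part k l)}

theorem tensorMap_add_left (S S' : MV n k →ₗ[ℂ] MV n l) (T : MV n k' →ₗ[ℂ] MV n l') :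
    tensorMap (S + S') T = tensorMap S T + tensorMap S' T := by
  apply LinearMap.toMatrix'.injective
  rw [map_add]
  unfold tensorMap
  rw [toMatrix'_mulVecLin, toMatrix'_mulVecLin, toMatrix'_mulVecLin]
  ext x y
  simp only [Matrix.add_apply, Matrix.of_apply, map_add, add_mul]

theorem tensorMap_add_right (S : MV n k →ₗ[ℂ] MV n l) (T T' : MV n k' →ₗ[ℂ] MV n l') :
    tensorMap S (T + T') = tensorMap S T + tensorMap S T' := by
  apply LinearMap.toMatrix'.injective
  rw [map_add]
  unfold tensorMap
  rw [toMatrix'_mulVecLin, toMatrix'_mulVecLin, toMatrix'_mulVecLin]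
  ext x y
  simp only [Matrix.add_apply, Matrix.of_apply, map_add, mul_add]

theorem tensorMap_smul_left (c : ℂ) (S : MV n k →ₗ[ℂ] MV n l) (T : MV n k' →ₗ[ℂ] MV n l') :
    tensorMap (c • S) T = c • tensorMap S T := by
  apply LinearMap.toMatrix'.injective
  rw [map_smul]
  unfold tensorMap
  rw [toMatrix'_mulVecLin, toMatrix'_mulVecLin]
  ext x y
  simp only [Matrix.smul_apply, Matrix.of_apply, map_smul, smul_eq_mul, mul_assoc]

theorem tensorMap_smul_right (c : ℂ) (S : MV n k →ₗ[ℂ] MV n l) (T : MV n k' →ₗ[ℂ] MV n l') :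
    tensorMap S (c • T) = c • tensorMap S T := by
  apply LinearMap.toMatrix'.injective
  rw [map_smul]
  unfold tensorMap
  rw [toMatrix'_mulVecLin, toMatrix'_mulVecLin]
  ext x y
  simp only [Matrix.smul_apply, Matrix.of_apply, map_smul, smul_eq_mul]
  ring

theorem tensorMap_zero_left (T : MV n k' →ₗ[ℂ] MV n l') :
    tensorMap (0 : MV n k →ₗ[ℂ] MV n l) T = 0 := by
  apply LinearMap.toMatrix'.injective
  rw [map_zero]
  unfold tensorMap
  rw [toMatrix'_mulVecLin]
  ext x y
  simp only [Matrix.of_apply, Matrix.zero_apply, map_zero, zero_mul]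

theorem tensorMap_zero_right (S : MV n k →ₗ[ℂ] MV n l) :
    tensorMap S (0 : MV n k' →ₗ[ℂ] MV n l') = 0 := by
  apply LinearMap.toMatrix'.injective
  rw [map_zero]
  unfold tensorMap
  rw [toMatrix'_mulVecLin]
  ext x y
  simp only [Matrix.of_apply, Matrix.zero_apply, map_zero, mul_zero]

theorem spanOf_tensor_mem (hR : IsSkewCategory R)
    (S : MV n k →ₗ[ℂ] MV n l) (T : MV n k' →ₗ[ℂ] MV n l')
    (hS : S ∈ spanOf n R k l) (hT : T ∈ spanOf n R k' l') :
    tensorMap S T ∈ spanOf n R (k + k') (l + l') := by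
  induction hT using Submodule.span_induction with
  | mem y hy =>
      induction hS using Submodule.span_induction with
      | mem x hx =>
          obtain ⟨p, hp, rfl⟩ := hx
          obtain ⟨q, hq, rfl⟩ := hy
          rw [tensorMap_hatT]
          refine Submodule.sum_mem _ fun r hr => ?_
          exact Submodule.subset_span
            ⟨r, connTensorSet_subset hR hp hq (Finset.mem_filter.mp hr).2, rfl⟩
      | zero => rw [tensorMap_zero_left]; exact zero_mem _
      | add x x' _ _ ihx ihx' => rw [tensorMap_add_left]; exact add_mem ihx ihx'
      | smul c x _ ih => rw [tensorMap_smul_left]; exact Submodule.smul_mem _ _ ih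
  | zero => rw [tensorMap_zero_right]; exact zero_mem _
  | add y y' _ _ ihy ihy' => rw [tensorMap_add_right]; exact add_mem ihy ihy'
  | smul c y _ ih => rw [tensorMap_smul_right]; exact Submodule.smul_mem _ _ ih

theorem spanOf_comp_mem (hR : IsSkewCategory R)
    (S : MV n k →ₗ[ℂ] MV n l) (T : MV n l →ₗ[ℂ] MV n l')
    (hS : S ∈ spanOf n R k l) (hT : T ∈ spanOf n R l l') :
    T ∘ₗ S ∈ spanOf n R k l' := by
  induction hT using Submodule.span_induction with
  | mem y hy =>
      induction hS using Submodule.span_induction with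
      | mem x hx =>
          obtain ⟨p, hp, rfl⟩ := hx
          obtain ⟨q, hq, rfl⟩ := hy
          rw [comp_hatT]
          refine Submodule.sum_mem _ fun r _ => ?_
          by_cases hc : compCoeff n p q r = 0
          · rw [hc]; simp
          · exact Submodule.smul_mem _ _
              (Submodule.subset_span ⟨r, compCoeff_ne_zero_mem hR hp hq r hc, rfl⟩)
      | zero => rw [LinearMap.comp_zero]; exact zero_mem _
      | add x x' _ _ ihx ihx' => rw [LinearMap.comp_add]; exact add_mem ihx ihx'
      | smul c x _ ih => rw [LinearMap.comp_smul]; exact Submodule.smul_mem _ _ ih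
  | zero => rw [LinearMap.zero_comp]; exact zero_mem _
  | add y y' _ _ ihy ihy' => rw [LinearMap.add_comp]; exact add_mem ihy ihy'
  | smul c y _ ih => rw [LinearMap.smul_comp]; exact Submodule.smul_mem _ _ ih

theorem spanOf_adjoint_mem (hR : IsSkewCategory R)
    (S : MV n k →ₗ[ℂ] MV n l) (hS : S ∈ spanOf n R k l) :
    adjointMap S ∈ spanOf n R l k := by
  induction hS using Submodule.span_induction with
  | mem x hx =>
      obtain ⟨p, hp, rfl⟩ := hx
      rw [adjointMap_hatT]
      exact Submodule.subset_span ⟨invol p, hR.invol_mem hp, rfl⟩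
  | zero => rw [adjointMap_zero]; exact zero_mem _
  | add x y _ _ ihx ihy => rw [adjointMap_add]; exact add_mem ihx ihy
  | smul a x _ ih => rw [adjointMap_smul]; exact Submodule.smul_mem _ _ ih

end SpanClosure

end GTQG
namespace GTQG

/-- `R ⊆ P` is a skew category of partitions if and only if
for every `n` the spaces `span{T̂_p^(n) : p ∈ R(k,l)}` form a tensor category
with duals. -/
theorem isSkewCategory_iff_tensorCategory (R : ∀ k l : ℕ, Set (Part k l)) :
    IsSkewCategory R ↔
      ∀ n : ℕ, 0 < n → IsTensorCategoryWithDuals n (spanOf n R) := by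
  constructor
  · intro hR n _
    exact
      { tensor_mem := fun S T hS hT => spanOf_tensor_mem hR S T hS hT
        comp_mem := fun S T hS hT => spanOf_comp_mem hR S T hS hT
        adjoint_mem := fun S hS => spanOf_adjoint_mem hR S hS
        id_mem := by
          rw [← hatT_idPart]
          exact Submodule.subset_span ⟨idPart, hR.id_mem, rfl⟩
        zeta_mem := by
          rw [← hatT_pairPart]
          exact Submodule.subset_span ⟨pairPart, hR.pair_mem, rfl⟩ }
  · intro H
    constructor
    · -- pair_mem
      have h := (H 2 (by norm_num)).zeta_mem
      rw [← hatT_pairPart] at h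
      obtain ⟨i, j, hker⟩ := exists_labelling (n := 2) pairPart (by norm_num)
      exact extract_mem_single pairPart h i j hker
    · -- id_mem
      have h := (H 2 (by norm_num)).id_mem
      rw [← hatT_idPart] at h
      obtain ⟨i, j, hker⟩ := exists_labelling (n := 2) idPart (by norm_num)
      exact extract_mem_single idPart h i j hker
    · -- invol_mem
      intro k l p hp
      have h1 : hatT (k + l + 1) p ∈ spanOf (k + l + 1) R k l :=
        Submodule.subset_span ⟨p, hp, rfl⟩
      have h2 := (H (k + l + 1) (by omega)).adjoint_mem _ h1
      rw [adjointMap_hatT] at h2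
      obtain ⟨i, j, hker⟩ := exists_labelling (n := k + l + 1) (invol p) (by omega)
      exact extract_mem_single (invol p) h2 i j hker
    · -- conn_tensor_mem
      intro k l k' l' p q i j f g hp hq hij hfg
      set n := (k + k') + (l + l') + 1 with hn
      have h1 : hatT n p ∈ spanOf n R k l := Submodule.subset_span ⟨p, hp, rfl⟩
      have h2 : hatT n q ∈ spanOf n R k' l' := Submodule.subset_span ⟨q, hq, rfl⟩
      have h3 := (H n (by omega)).tensor_mem _ _ h1 h2
      rw [tensorMap_hatT] at h3
      have hr₀mem : kerPart (Fin.append i f) (Fin.append j g) ∈ connTensorSet p q :=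
        ⟨i, j, f, g, hij, hfg, rfl⟩
      obtain ⟨i₀, j₀, hker⟩ := exists_labelling (n := n)
        (kerPart (Fin.append i f) (Fin.append j g)) (by omega)
      refine extract_mem (n := n)
        (fun r => if r ∈ connTensorSet p q then (1 : ℂ) else 0) ?_ _
        (by
          show (if kerPart (Fin.append i f) (Fin.append j g) ∈ connTensorSet p q
            then (1 : ℂ) else 0) ≠ 0
          rw [if_pos hr₀mem]; exact one_ne_zero) i₀ j₀ hker
      rw [show (∑ r : Part (k + k') (l + l'), (if r ∈ connTensorSet p q then (1 : ℂ) else 0)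
            • hatT n r)
          = ∑ r ∈ Finset.univ.filter (fun r => r ∈ connTensorSet p q), hatT n r by
        rw [Finset.sum_filter]
        refine Finset.sum_congr rfl fun r _ => ?_
        split_ifs with hr
        · rw [one_smul]
        · rw [zero_smul]]
      exact h3
    · -- cond_comp_mem
      intro k l l' p q hp hq hcompat
      set n := k + (l + l') + 1 with hn
      have h1 : hatT n p ∈ spanOf n R k l := Submodule.subset_span ⟨p, hp, rfl⟩
      have h2 : hatT n q ∈ spanOf n R l l' := Submodule.subset_span ⟨q, hq, rfl⟩
      have h3 := (H n (by omega)).comp_mem _ _ h1 h2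
      rw [comp_hatT] at h3
      obtain ⟨i, h, g, e1, e2, e3⟩ :=
        exists_compatible_labelling (n := n) p q hcompat (by omega)
      refine extract_mem (fun r => (compCoeff n p q r : ℂ)) h3 (compPart p q) ?_ i g e3
      show (compCoeff n p q (compPart p q) : ℂ) ≠ 0
      rw [← e3, ← hCount_eq_compCoeff, Nat.cast_ne_zero, hCount, Nat.card_ne_zero]
      exact ⟨⟨⟨h, e1, e2⟩⟩, inferInstance⟩

end GTQG
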